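/- For every natural number n ≥ 1, the number of functions f : Fin n → Bool such that no two cyclically consecutive positions are both true (i.e., for all i, not (f i = true and f ((i+1) mod n) = true)) equals the Lucas number L_n = F_{n-1} + F_{n+1}, where F denotes the Fibonacci sequence with F_0 = 0, F_1 = 1. -/

import Mathlib

/-!
A cyclic string with no two consecutive `true`s is the same thing as a closed walk of length `n`
in the graph on `Bool` joining `a` to `b` unless both are `true`. Closed walks of length `n` are
counted by the trace of the `n`-th power of the transfer matrix `[[1, 1], [1, 0]]`, and this power
is `[[F (n+1), F n], [F n, F (n-1)]]`.
-/

open Finset Matrix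

section TransferMatrix

variable {α : Type*} [Fintype α] [DecidableEq α] (r : α → α → Prop) [DecidableRel r]

def transferMatrix : Matrix α α ℕ := Matrix.of fun a b => if r a b then 1 else 0

def walks (k : ℕ) (a b : α) : Finset (Fin (k + 1) → α) :=
  {p | p 0 = a ∧ p (Fin.last k) = b ∧ ∀ t : Fin k, r (p t.castSucc) (p t.succ)}

theorem card_walks_zero (a b : α) : #(walks r 0 a b) = if a = b then 1 else 0 := by
  split_ifs with hab
  · subst hab
    rw [card_eq_one]
    refine ⟨fun _ => a, ?_⟩
    ext p
    simp [walks, funext_iff, Fin.forall_fin_one]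
  · rw [card_eq_zero, walks, filter_eq_empty_iff]
    rintro p - ⟨rfl, h, -⟩
    exact hab h

theorem card_walks_succ (k : ℕ) (a b : α) :
    #(walks r (k + 1) a b) = ∑ c, if r a c then #(walks r k c b) else 0 := by
  rw [card_eq_sum_card_fiberwise (f := fun p => p 1) (t := univ) (fun _ _ => mem_univ _)]
  refine sum_congr rfl fun c _ => ?_
  split_ifs with hac
  · refine card_bij' (fun p _ => Fin.tail p) (fun q _ => Fin.cons a q) ?_ ?_ ?_ ?_
    · simp only [walks, mem_filter, mem_univ, true_and, Fin.forall_fin_succ]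
      rintro p ⟨⟨-, hlast, -, hchain⟩, h1⟩
      exact ⟨h1, hlast, fun t => by simpa only [Fin.tail, Fin.succ_castSucc] using hchain t⟩
    · simp only [walks, mem_filter, mem_univ, true_and, Fin.forall_fin_succ]
      rintro q ⟨rfl, hlast, hchain⟩
      simpa [← Fin.succ_castSucc, hac, hlast] using hchain
    · simp only [walks, mem_filter, mem_univ, true_and]
      rintro p ⟨⟨rfl, -⟩, -⟩
      exact Fin.cons_self_tail p
    · intro q _
      exact Fin.tail_cons _ _
  · rw [card_eq_zero, filter_eq_empty_iff]
    rintro p hp rfl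
    simp only [walks, mem_filter, Fin.forall_fin_succ] at hp
    exact hac (hp.2.1 ▸ hp.2.2.2.1)

theorem transferMatrix_pow_apply (k : ℕ) (a b : α) :
    (transferMatrix r ^ k) a b = #(walks r k a b) := by
  induction k generalizing a with
  | zero => simp [card_walks_zero, one_apply]
  | succ k ih =>
    rw [pow_succ', mul_apply, card_walks_succ]
    simp_rw [ih]
    simp [transferMatrix]

end TransferMatrix

section CyclicStrings

open Fin.NatCast

theorem apply_eq_apply_castSucc_natCast {α : Type*} {n : ℕ} [NeZero n] {p : Fin (n + 1) → α}
    (hp : p 0 = p (Fin.last n)) (t : Fin (n + 1)) : p t = p (Fin.castSucc (t : ℕ)) := by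
  rcases t.eq_castSucc_or_eq_last with ⟨i, rfl⟩ | rfl
  · rw [Fin.val_castSucc, Fin.cast_val_eq_self]
  · rw [Fin.val_last, Fin.natCast_self, Fin.castSucc_zero, hp]

/-- A cyclic string `f` starting at `a` is the closed walk `t ↦ f (t mod n)` of length `n`. -/
theorem card_cyclic_eq_trace {α : Type*} [Fintype α] [DecidableEq α] (r : α → α → Prop)
    [DecidableRel r] (n : ℕ) [NeZero n] :
    #{f : Fin n → α | ∀ i, r (f i) (f (i + 1))} = trace (transferMatrix r ^ n) := by
  rw [trace, card_eq_sum_card_fiberwise (f := fun f => f 0) (t := univ) (fun _ _ => mem_univ _)]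
  refine sum_congr rfl fun a _ => ?_
  rw [diag_apply, transferMatrix_pow_apply]
  refine card_bij' (fun f _ t => f t) (fun p _ i => p i.castSucc) ?_ ?_ ?_ ?_
  · simp only [walks, mem_filter, mem_univ, true_and]
    rintro f ⟨hf, rfl⟩
    exact ⟨by simp, by simp, fun t => by simpa using hf t⟩
  · simp only [walks, mem_filter, mem_univ, true_and]
    rintro p ⟨hp0, hlast, hchain⟩
    refine ⟨fun i => ?_, hp0⟩
    have hstep := hchain i
    rw [apply_eq_apply_castSucc_natCast (hp0.trans hlast.symm) i.succ] at hstep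
    simpa using hstep
  · intro f _
    funext i
    simp
  · simp only [walks, mem_filter, mem_univ, true_and]
    rintro p ⟨hp0, hlast, -⟩
    funext t
    exact (apply_eq_apply_castSucc_natCast (hp0.trans hlast.symm) t).symm

end CyclicStrings

abbrev refractory (a b : Bool) : Prop := ¬(a = true ∧ b = true)

theorem transferMatrix_refractory_pow_succ_apply (k : ℕ) (a b : Bool) :
    (transferMatrix refractory ^ (k + 1)) a b = Nat.fib (k + 2 - a.toNat - b.toNat) := by
  induction k generalizing b with
  | zero => cases a <;> cases b <;> simp [transferMatrix]
  | succ k ih =>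
    rw [pow_succ, mul_apply, Fintype.sum_bool, ih, ih]
    cases a <;> cases b <;> simp [transferMatrix, Nat.fib_add_two]

theorem trace_transferMatrix_refractory_pow (n : ℕ) (hn : 1 ≤ n) :
    trace (transferMatrix refractory ^ n) = Nat.fib (n - 1) + Nat.fib (n + 1) := by
  obtain ⟨k, rfl⟩ := Nat.exists_eq_add_of_le' hn
  simp [trace, transferMatrix_refractory_pow_succ_apply]

/-- For `n ≥ 1`, the number of binary strings of length `n` with no two
cyclically consecutive `true`s equals the Lucas number `L n = F (n-1) + F (n+1)`. -/
theorem count_cyclic_refractory_eq_lucas (n : ℕ) (hn : 1 ≤ n) :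
    Fintype.card {f : Fin n → Bool //
      ∀ i : Fin n,
        ¬(f i = true ∧ f ⟨((i : ℕ) + 1) % n, Nat.mod_lt _ (by omega)⟩ = true)} =
    Nat.fib (n - 1) + Nat.fib (n + 1) := by
  have : NeZero n := ⟨by omega⟩
  have hsucc : ∀ i : Fin n, (⟨((i : ℕ) + 1) % n, Nat.mod_lt _ (by omega)⟩ : Fin n) = i + 1 :=
    fun i => Fin.ext (by simp [Fin.val_add])
  simp_rw [hsucc]
  rw [Fintype.card_subtype, card_cyclic_eq_trace refractory n,
    trace_transferMatrix_refractory_pow n hn]
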